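/- arXiv:2305.06952 — 4 statements merged into one kernel-verified Lean document; each statement's English description precedes it below -/
import Mathlib

section
/- Let Γ be a δ-hyperbolic graph with basepoint 1, and let r, s : ℕ → Γ be geodesic rays (maps with d(1, r(n)) = d(1, r(0)) + n for all n, and consecutive vertices adjacent; similarly for s) with d(1,r(0)) = d(1,s(0)) and r(0) = s(0) = 1. If the sequence d(r(n), s(n)) is bounded, then d(r(n), s(n)) ≤ 2δ for all n ∈ ℕ. -/
/-!
Fix `n` and look at a far time `m`. In the geodesic triangle with vertices `o`, `s m`, `r m`
the side `[s m, r m]` has length at most `K`, so all its points are at distance at least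
`m - K` from `o` and none of them is `δ`-close to `r n` once `m > n + K + δ`. Thinness then
makes `r n` `δ`-close to some `s j`; comparing distances to `o` gives `|j - n| ≤ δ`, hence
`d(r n, s n) ≤ 2δ`.
-/

/-- `p` is a geodesic segment of length `n` in the graph `G`. -/
def IsGeodesicSeg {V : Type*} (G : SimpleGraph V) (n : ℕ) (p : ℕ → V) : Prop :=
  (∀ i < n, G.Adj (p i) (p (i + 1))) ∧
  ∀ i j : ℕ, i ≤ j → j ≤ n → G.dist (p i) (p j) = j - i

/-- `G` has `δ`-thin triangles: given any three vertices and any geodesic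
segments joining them pairwise, every point of `[x,z]` lies within distance `δ`
of `[x,y] ∪ [y,z]`. -/
def ThinTriangles {V : Type*} (G : SimpleGraph V) (δ : ℕ) : Prop :=
  ∀ (x y z : V) (nxy nyz nxz : ℕ) (pxy pyz pxz : ℕ → V),
    IsGeodesicSeg G nxy pxy → pxy 0 = x → pxy nxy = y →
    IsGeodesicSeg G nyz pyz → pyz 0 = y → pyz nyz = z →
    IsGeodesicSeg G nxz pxz → pxz 0 = x → pxz nxz = z →
    ∀ i ≤ nxz, ∃ j : ℕ,
      (j ≤ nxy ∧ G.dist (pxz i) (pxy j) ≤ δ) ∨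
      (j ≤ nyz ∧ G.dist (pxz i) (pyz j) ≤ δ)

section

open SimpleGraph

variable {V : Type*} {G : SimpleGraph V}

lemma SimpleGraph.exists_walk_length_eq_sub_of_adj {n : ℕ} {p : ℕ → V}
    (hadj : ∀ i < n, G.Adj (p i) (p (i + 1))) {i j : ℕ} (hij : i ≤ j) (hjn : j ≤ n) :
    ∃ w : G.Walk (p i) (p j), w.length = j - i := by
  induction j, hij using Nat.le_induction with
  | base => exact ⟨.nil, by simp⟩
  | succ j hij ih =>
    obtain ⟨w, hw⟩ := ih (by omega)
    exact ⟨w.concat (hadj j (by omega)), by rw [Walk.length_concat, hw]; omega⟩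

lemma IsGeodesicSeg.of_adj_of_dist_eq {n : ℕ} {p : ℕ → V}
    (hadj : ∀ i < n, G.Adj (p i) (p (i + 1))) (hdist : G.dist (p 0) (p n) = n) :
    IsGeodesicSeg G n p := by
  refine ⟨hadj, fun i j hij hjn => le_antisymm ?_ ?_⟩
  · obtain ⟨w, hw⟩ := exists_walk_length_eq_sub_of_adj hadj hij hjn
    exact hw ▸ dist_le w
  · obtain ⟨w₀, hw₀⟩ := exists_walk_length_eq_sub_of_adj hadj (Nat.zero_le i) (hij.trans hjn)
    obtain ⟨w₁, -⟩ := exists_walk_length_eq_sub_of_adj hadj hij hjn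
    obtain ⟨w₂, hw₂⟩ := exists_walk_length_eq_sub_of_adj hadj hjn le_rfl
    have h₀ := w₀.reachable.dist_triangle_left (p n)
    have h₁ := w₁.reachable.dist_triangle_left (p n)
    have h₂ := dist_le w₀
    have h₃ := dist_le w₂
    omega

lemma SimpleGraph.Walk.isGeodesicSeg_getVert {u v : V} (w : G.Walk u v)
    (hw : w.length = G.dist u v) : IsGeodesicSeg G w.length w.getVert :=
  .of_adj_of_dist_eq (fun _ hi => w.adj_getVert_succ hi) (by simpa using hw.symm)

lemma IsGeodesicSeg.dist_zero {n : ℕ} {p : ℕ → V} (hp : IsGeodesicSeg G n p) {i : ℕ}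
    (hi : i ≤ n) : G.dist (p 0) (p i) = i :=
  hp.2 0 i (Nat.zero_le i) hi

lemma IsGeodesicSeg.dist_le_two_mul (hconn : G.Preconnected) {m n j δ : ℕ} {r s : ℕ → V}
    (hr : IsGeodesicSeg G m r) (hs : IsGeodesicSeg G m s) (h0 : r 0 = s 0)
    (hn : n ≤ m) (hj : j ≤ m) (hd : G.dist (r n) (s j) ≤ δ) :
    G.dist (r n) (s n) ≤ 2 * δ := by
  have hrn := hr.dist_zero hn
  have hsj := hs.dist_zero hj
  rw [h0] at hrn
  have h₁ := (hconn (s 0) (r n)).dist_triangle_left (s j)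
  have h₂ := (hconn (s 0) (s j)).dist_triangle_left (r n)
  rw [SimpleGraph.dist_comm (u := s j)] at h₂
  have hsjn : G.dist (s j) (s n) ≤ δ := by
    rcases le_total j n with h | h
    · rw [hs.2 j n h hn]; omega
    · rw [SimpleGraph.dist_comm, hs.2 n j h hj]; omega
  have h₃ := (hconn (r n) (s j)).dist_triangle_left (s n)
  omega

theorem ThinTriangles.dist_le_two_mul {δ : ℕ} (hδ : ThinTriangles G δ)
    (hconn : G.Preconnected) {m n : ℕ} {r s : ℕ → V}
    (hr : IsGeodesicSeg G m r) (hs : IsGeodesicSeg G m s) (h0 : r 0 = s 0)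
    (hm : n + G.dist (s m) (r m) + δ < m) :
    G.dist (r n) (s n) ≤ 2 * δ := by
  obtain ⟨w, hw⟩ := (hconn (s m) (r m)).exists_walk_length_eq_dist
  have hwL : w.getVert w.length = r m := w.getVert_length
  obtain ⟨j, ⟨hj, hd⟩ | ⟨hj, hd⟩⟩ := hδ (r 0) (s m) (r m) m w.length m s w.getVert r
    hs h0.symm rfl (w.isGeodesicSeg_getVert hw) w.getVert_zero hwL hr rfl rfl n (by omega)
  · exact hr.dist_le_two_mul hconn hs h0 (by omega) hj hd
  · -- `r n` cannot be `δ`-close to the short side `[s m, r m]`, which lies far from `r 0`.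
    exfalso
    have h₁ := (hconn (r 0) (w.getVert j)).dist_triangle_left (r m)
    have h₂ := (hconn (r 0) (r n)).dist_triangle_left (w.getVert j)
    have hwj := (w.isGeodesicSeg_getVert hw).2 j w.length hj le_rfl
    rw [hwL] at hwj
    have hrm := hr.dist_zero (le_refl m)
    have hrn := hr.dist_zero (show n ≤ m by omega)
    omega

end

theorem rays_fellow_travel_general {V : Type*} (G : SimpleGraph V)
    (hconn : G.Preconnected) (δ : ℕ) (hδ : ThinTriangles G δ)
    (o : V) (r s : ℕ → V)
    (hradj : ∀ n, G.Adj (r n) (r (n + 1)))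
    (hrdist : ∀ n, G.dist o (r n) = G.dist o (r 0) + n)
    (hsadj : ∀ n, G.Adj (s n) (s (n + 1)))
    (hsdist : ∀ n, G.dist o (s n) = G.dist o (s 0) + n)
    (hr0 : r 0 = o) (hs0 : s 0 = o)
    (K : ℕ) (hK : ∀ n, G.dist (r n) (s n) ≤ K) :
    ∀ n, G.dist (r n) (s n) ≤ 2 * δ := by
  have hr (m : ℕ) : IsGeodesicSeg G m r := .of_adj_of_dist_eq (fun i _ => hradj i)
    (by rw [hr0, hrdist, hr0, SimpleGraph.dist_self, zero_add])
  have hs (m : ℕ) : IsGeodesicSeg G m s := .of_adj_of_dist_eq (fun i _ => hsadj i)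
    (by rw [hs0, hsdist, hs0, SimpleGraph.dist_self, zero_add])
  intro n
  have hK' : G.dist (s (n + K + δ + 1)) (r (n + K + δ + 1)) ≤ K :=
    SimpleGraph.dist_comm.trans_le (hK _)
  exact hδ.dist_le_two_mul hconn (hr (n + K + δ + 1)) (hs _) (hr0.trans hs0.symm) (by omega)

/-- Fellow-traveling of geodesic rays in a `δ`-hyperbolic graph: two geodesic
rays based at the same point that stay at bounded distance stay within `2δ`. -/
theorem rays_fellow_travel {V : Type*} (G : SimpleGraph V)
    (hconn : G.Preconnected) (δ : ℕ) (hδ : ThinTriangles G δ)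
    (o : V) (r s : ℕ → V)
    (hradj : ∀ n, G.Adj (r n) (r (n + 1)))
    (hrdist : ∀ n, G.dist o (r n) = G.dist o (r 0) + n)
    (hsadj : ∀ n, G.Adj (s n) (s (n + 1)))
    (hsdist : ∀ n, G.dist o (s n) = G.dist o (s 0) + n)
    (hbase : G.dist o (r 0) = G.dist o (s 0))
    (hr0 : r 0 = o) (hs0 : s 0 = o)
    (K : ℕ) (hK : ∀ n, G.dist (r n) (s n) ≤ K) :
    ∀ n, G.dist (r n) (s n) ≤ 2 * δ :=
  rays_fellow_travel_general G hconn δ hδ o r s hradj hrdist hsadj hsdist hr0 hs0 K hK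
end

section
/- Let G be a word hyperbolic group whose Cayley graph with respect to the finite generating set S is δ-hyperbolic, and suppose the function g ↦ N_g (recording ‖gh‖ − ‖g‖ for all h with ‖h‖ ≤ 2δ) satisfies: N_g determines the cone type of g. Then G has only finitely many cone types, where the cone type of g is the set {h ∈ G : ‖gh‖ = ‖g‖ + ‖h‖}. -/
/-!
Cannon's argument: for `‖h‖ ≤ n` the increment `‖gh‖ - ‖g‖` lies in `[-n, n]`, and the ball
of radius `n` is finite, so the function `h ↦ ‖gh‖ - ‖g‖` on the ball of radius `2δ` takes
only finitely many values as `g` ranges over `G`. Since it determines the cone type of `g`,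
there are only finitely many cone types.
-/

/-- Word length of `g` with respect to the generating set `S`. -/
noncomputable def wordLength {G : Type*} [Group G] (S : Set G) (g : G) : ℕ :=
  sInf {n | ∃ w : List G, (∀ x ∈ w, x ∈ S) ∧ w.length = n ∧ w.prod = g}

/-- The cone type of `g`: those `h` with `‖gh‖ = ‖g‖ + ‖h‖`. -/
def coneType {G : Type*} [Group G] (S : Set G) (g : G) : Set G :=
  {h : G | wordLength S (g * h) = wordLength S g + wordLength S h}

theorem Function.FactorsThrough.finite_range {α β γ : Type*} {f : α → β} {F : α → γ}
    (hfF : f.FactorsThrough F) (hF : (Set.range F).Finite) : (Set.range f).Finite := by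
  have := hF.to_subtype
  refine (Set.finite_range fun c : Set.range F => f c.2.choose).subset ?_
  rintro _ ⟨a, rfl⟩
  exact ⟨⟨F a, a, rfl⟩, hfF (Exists.choose_spec (⟨a, rfl⟩ : F a ∈ Set.range F))⟩

theorem Submonoid.closure_eq_top_of_inv_eq {G : Type*} [Group G] {S : Set G} (hsymm : S⁻¹ = S)
    (hgen : Subgroup.closure S = ⊤) : Submonoid.closure S = ⊤ := by
  rw [← Set.union_self S, ← congrArg (S ∪ ·) hsymm, ← Subgroup.closure_toSubmonoid, hgen,
    Subgroup.top_toSubmonoid]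

namespace wordLength

variable {G : Type*} [Group G] {S : Set G}

theorem le_length (w : List G) (hw : ∀ x ∈ w, x ∈ S) : wordLength S w.prod ≤ w.length :=
  Nat.sInf_le ⟨w, hw, rfl, rfl⟩

theorem exists_minimal_word (hS : Submonoid.closure S = ⊤) (g : G) :
    ∃ w : List G, (∀ x ∈ w, x ∈ S) ∧ w.length = wordLength S g ∧ w.prod = g := by
  obtain ⟨w, hw, rfl⟩ := Submonoid.exists_list_of_mem_closure (hS ▸ Submonoid.mem_top g)
  have hne :
      {n | ∃ v : List G, (∀ x ∈ v, x ∈ S) ∧ v.length = n ∧ v.prod = w.prod}.Nonempty :=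
    ⟨w.length, w, hw, rfl, rfl⟩
  exact Nat.sInf_mem hne

theorem mul_le (hS : Submonoid.closure S = ⊤) (g h : G) :
    wordLength S (g * h) ≤ wordLength S g + wordLength S h := by
  obtain ⟨v, hv, hvl, rfl⟩ := exists_minimal_word hS g
  obtain ⟨w, hw, hwl, rfl⟩ := exists_minimal_word hS h
  rw [← hvl, ← hwl, ← List.length_append, ← List.prod_append]
  exact le_length _ fun x hx => (List.mem_append.1 hx).elim (hv x) (hw x)

theorem inv_le (hsymm : S⁻¹ = S) (hS : Submonoid.closure S = ⊤) (g : G) :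
    wordLength S g⁻¹ ≤ wordLength S g := by
  obtain ⟨w, hw, hwl, rfl⟩ := exists_minimal_word hS g
  rw [← hwl, List.prod_inv_reverse, ← List.length_map (f := fun x : G => x⁻¹),
    ← List.length_reverse]
  refine le_length _ fun x hx => ?_
  obtain ⟨y, hy, rfl⟩ := List.mem_map.1 (List.mem_reverse.1 hx)
  exact hsymm ▸ Set.inv_mem_inv.2 (hw y hy)

theorem inv (hsymm : S⁻¹ = S) (hS : Submonoid.closure S = ⊤) (g : G) :
    wordLength S g⁻¹ = wordLength S g :=
  (inv_le hsymm hS g).antisymm (by simpa using inv_le hsymm hS g⁻¹)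

theorem abs_mul_sub_le (hsymm : S⁻¹ = S) (hS : Submonoid.closure S = ⊤) (g h : G) :
    |(wordLength S (g * h) : ℤ) - wordLength S g| ≤ wordLength S h := by
  have hupper := mul_le hS g h
  have hlower := mul_le hS (g * h) h⁻¹
  rw [mul_inv_cancel_right, inv hsymm hS] at hlower
  rw [abs_le]
  constructor <;> omega

theorem finite_setOf_le (hSfin : S.Finite) (hS : Submonoid.closure S = ⊤) (n : ℕ) :
    {g : G | wordLength S g ≤ n}.Finite := by
  have := hSfin.to_subtype
  refine ((List.finite_length_le S n).image fun l => (l.map (↑)).prod).subset fun g hg => ?_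
  obtain ⟨w, hw, hwl, rfl⟩ := exists_minimal_word hS g
  refine ⟨w.pmap Subtype.mk hw, ?_, ?_⟩
  · simpa [hwl] using hg
  · simp [List.map_pmap]

end wordLength

/-- The function `N_g` of the paper on the ball of radius `n`. -/
noncomputable def lengthIncrement {G : Type*} [Group G] (S : Set G) (n : ℕ) (g : G) :
    {h : G // wordLength S h ≤ n} → ℤ :=
  fun h => (wordLength S (g * h) : ℤ) - wordLength S g

theorem finite_range_lengthIncrement {G : Type*} [Group G] {S : Set G} (hSfin : S.Finite)
    (hsymm : S⁻¹ = S) (hS : Submonoid.closure S = ⊤) (n : ℕ) :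
    (Set.range (lengthIncrement S n)).Finite := by
  have : Finite {h : G // wordLength S h ≤ n} :=
    (wordLength.finite_setOf_le hSfin hS n).to_subtype
  refine (Set.Finite.pi fun _ => Set.finite_Icc (-(n : ℤ)) n).subset ?_
  rintro _ ⟨g, rfl⟩ ⟨h, hh⟩ -
  have := wordLength.abs_mul_sub_le hsymm hS g h
  exact abs_le.1 (this.trans (by exact_mod_cast hh))

/-- If the decoration `N_g` (recording `‖gh‖ − ‖g‖` for all `h` with
`‖h‖ ≤ 2δ`) determines the cone type of `g`, then there are only finitely many
cone types. -/
theorem finitely_many_cone_types (G : Type*) [Group G] (S : Set G)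
    (hSfin : S.Finite) (hsymm : S⁻¹ = S) (hgen : Subgroup.closure S = ⊤)
    (δ : ℕ)
    (hdet : ∀ g g' : G,
      (∀ h : G, wordLength S h ≤ 2 * δ →
        (wordLength S (g * h) : ℤ) - (wordLength S g : ℤ) =
          (wordLength S (g' * h) : ℤ) - (wordLength S g' : ℤ)) →
      coneType S g = coneType S g') :
    (Set.range (coneType S)).Finite := by
  have hS := Submonoid.closure_eq_top_of_inv_eq hsymm hgen
  have hfactors : (coneType S).FactorsThrough (lengthIncrement S (2 * δ)) :=
    fun g g' hgg' => hdet g g' fun h hh => congrFun hgg' ⟨h, hh⟩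
  exact hfactors.finite_range (finite_range_lengthIncrement hSfin hsymm hS (2 * δ))
end

section
/- Let G = ⟨S⟩ be a finitely generated group and let G act on itself by left translation. Suppose G contains an infinite, finitely generated subgroup H. Then the right coset partition of G yields a free action of H on G by piecewise right-translations; in particular the restriction of any subshift of finite type over G to H-orbits is again a subshift of finite type over H, and hence if H has undecidable domino problem then so does G. -/
/-!
An `H`-tiling is simulated on `G` by giving `g` the tuple of the `H`-colours at the points
`g * x⁻¹`, `x` running over a finite window of `G` that contains `1` and the generators `T j` of
`H` and is connected in the Cayley graph of `G` (a ball), packed into one colour in base `m`.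
The new dominoes say that the tuples at `g` and `g * S i` agree where the translated windows
overlap, and that the tuple at `g` satisfies the `H`-dominoes between `g * (T j)⁻¹` and `g`.
Since the window is connected, agreement propagates along it, so tilings by the new tileset are
the same as colourings of `G` obeying the `H`-dominoes along right multiplication by the `T j`.
The latter preserves each coset `g H`, on which it is the Cayley graph of `H`, so such colourings
exist iff `H` can be tiled. The new tileset is computable from the old one, so a decision
procedure for `G` would give one for `H`.
-/

/-- A tileset `(m, Θ)` (colours `{0,…,m-1}`, dominoes `Θ`) tiles the Cayley
graph of `G` with respect to the generating tuple `Sf`. -/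
def Tileable {G : Type*} [Group G] {s : ℕ} (Sf : Fin s → G)
    (m : ℕ) (Θ : List (ℕ × ℕ × ℕ)) : Prop :=
  ∃ a : G → ℕ, (∀ g : G, a g < m) ∧
    ∀ (g : G) (i : Fin s), (a g, (i : ℕ), a (g * Sf i)) ∈ Θ

/-- Decidability of the domino problem of `G` with respect to `Sf`: a
computable function deciding, given a tileset, whether it tiles `G`. -/
def DominoDecidable {G : Type*} [Group G] {s : ℕ} (Sf : Fin s → G) : Prop :=
  ∃ f : ℕ × List (ℕ × ℕ × ℕ) → Bool, Computable f ∧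
    ∀ T : ℕ × List (ℕ × ℕ × ℕ), f T = true ↔ Tileable Sf T.1 T.2

theorem Primrec.nat_pow : Primrec₂ ((· ^ ·) : ℕ → ℕ → ℕ) :=
  Primrec₂.unpaired'.1 Nat.Primrec.pow

open Primrec in
theorem Primrec.list_product {α β : Type*} [Primcodable α] [Primcodable β] :
    Primrec₂ fun (l : List α) (l' : List β) => l ×ˢ l' :=
  list_flatMap fst (list_map (snd.comp fst) (pair (snd.comp fst) snd).to₂).to₂

theorem PrimrecRel.mem_list {α : Type*} [Primcodable α] :
    PrimrecRel fun (a : α) (l : List α) => a ∈ l :=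
  (Primrec.eq.swap.exists_mem_list.comp Primrec.snd Primrec.fst).of_eq fun _ => by simp

theorem PrimrecPred.imp {α : Type*} [Primcodable α] {p q : α → Prop} (hp : PrimrecPred p)
    (hq : PrimrecPred q) : PrimrecPred fun a => p a → q a :=
  (hp.not.or hq).of_eq fun _ => imp_iff_not_or.symm

theorem PrimrecRel.forall_of_fintype {ι α : Type*} [Primcodable ι] [Fintype ι] [Primcodable α]
    {R : ι → α → Prop} (hR : PrimrecRel R) : PrimrecPred fun a => ∀ i, R i a :=
  (hR.forall_mem_list.comp (Primrec.const Finset.univ.toList) Primrec.id).of_eq fun _ => by simp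

section Cosets

variable {G : Type*} [Group G] (H : Subgroup G)

noncomputable def cosetCoord (g : G) : H :=
  ⟨(g : G ⧸ H).out⁻¹ * g, QuotientGroup.eq.mp (QuotientGroup.out_eq' _)⟩

theorem cosetCoord_mul (g : G) (h : H) : cosetCoord H (g * h) = cosetCoord H g * h := by
  have hgh : ((g * h : G) : G ⧸ H) = g := QuotientGroup.mk_mul_of_mem g h.2
  ext
  simp [cosetCoord, hgh, mul_assoc]

theorem tileable_subgroup_iff {t : ℕ} (T : Fin t → H) (m : ℕ) (Θ : List (ℕ × ℕ × ℕ)) :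
    Tileable (fun j => (T j : G)) m Θ ↔ Tileable T m Θ := by
  constructor
  · rintro ⟨a, ha, hΘ⟩
    exact ⟨fun h => a h, fun h => ha h, fun h j => hΘ h j⟩
  · rintro ⟨b, hb, hΘ⟩
    refine ⟨fun g => b (cosetCoord H g), fun g => hb _, fun g j => ?_⟩
    simpa [cosetCoord_mul] using hΘ (cosetCoord H g) j

end Cosets

section Windows

variable {G : Type*} [Group G] {s K : ℕ} (S : Fin s → G) (w : Fin K → G)

def CayleyStep (q q' : Fin K) : Prop := ∃ i, w q' = w q * S i

/-- Read `v g q` as the colour seen at the point `g * (w q)⁻¹`: the edge law `hv` says that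
neighbouring positions see a common point alike, and connectivity extends this to any two. -/
theorem transport_of_eqvGen {v : G → Fin K → ℕ}
    (hv : ∀ g i q q', w q' = w q * S i → v (g * S i) q' = v g q) {q q' : Fin K}
    (h : Relation.EqvGen (CayleyStep S w) q q') (g : G) :
    v (g * (w q)⁻¹ * w q') q' = v g q := by
  induction h generalizing g with
  | rel q q' hstep =>
    obtain ⟨i, hi⟩ := hstep
    simpa [hi, mul_assoc] using hv g i q q' hi
  | refl q => simp
  | symm q q' _ ih =>
    simpa [mul_assoc] using (ih (g * (w q')⁻¹ * w q)).symm
  | trans q q' q'' _ _ ih ih' =>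
    simpa [mul_assoc] using (ih' (g * (w q)⁻¹ * w q')).trans (ih g)

variable [DecidableEq G]
open scoped Pointwise

def cayleyLetters : Finset G := Finset.univ.image S ∪ Finset.univ.image fun i => (S i)⁻¹

def cayleyBall : ℕ → Finset G
  | 0 => {1}
  | r + 1 => cayleyBall r ∪ cayleyBall r * cayleyLetters S

theorem cayleyBall_mono : Monotone (cayleyBall S) :=
  monotone_nat_of_le_succ fun _ => Finset.subset_union_left

theorem mul_mem_cayleyBall_succ {r : ℕ} {x y : G} (hx : x ∈ cayleyBall S r)
    (hy : y ∈ cayleyLetters S) : x * y ∈ cayleyBall S (r + 1) :=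
  Finset.mem_union_right _ (Finset.mul_mem_mul hx hy)

theorem exists_mem_cayleyBall (hS : Subgroup.closure (Set.range S) = ⊤) (x : G) :
    ∃ r, x ∈ cayleyBall S r := by
  have hx : x ∈ Subgroup.closure (Set.range S) := hS ▸ Subgroup.mem_top x
  induction hx using Subgroup.closure_induction_right with
  | one => exact ⟨0, Finset.mem_singleton_self 1⟩
  | mul_right x _ y hy ih =>
    obtain ⟨r, hr⟩ := ih
    obtain ⟨i, rfl⟩ := hy
    exact ⟨r + 1, mul_mem_cayleyBall_succ S hr (by simp [cayleyLetters])⟩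
  | mul_inv_cancel x _ y hy ih =>
    obtain ⟨r, hr⟩ := ih
    obtain ⟨i, rfl⟩ := hy
    exact ⟨r + 1, mul_mem_cayleyBall_succ S hr (by simp [cayleyLetters])⟩

theorem one_mem_cayleyBall (r : ℕ) : (1 : G) ∈ cayleyBall S r :=
  cayleyBall_mono S (Nat.zero_le r) (Finset.mem_singleton_self 1)

theorem eqvGen_cayleyStep_cayleyBall {R : ℕ} (e : cayleyBall S R ≃ Fin K)
    (x : cayleyBall S R) :
    Relation.EqvGen (CayleyStep S fun q => (e.symm q : G))
      (e ⟨1, one_mem_cayleyBall S R⟩) (e x) := by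
  suffices ∀ n (hn : n ≤ R) x (hx : x ∈ cayleyBall S n),
      Relation.EqvGen (CayleyStep S fun q => (e.symm q : G))
        (e ⟨1, one_mem_cayleyBall S R⟩) (e ⟨x, cayleyBall_mono S hn hx⟩) from
    this R le_rfl x x.2
  intro n hn x hx
  induction n generalizing x with
  | zero =>
    obtain rfl := Finset.mem_singleton.mp hx
    exact .refl _
  | succ n ih =>
    rcases Finset.mem_union.mp hx with hx | hx
    · exact ih (by omega) x hx
    obtain ⟨y, hy, z, hz, rfl⟩ := Finset.mem_mul.mp hx
    refine .trans _ _ _ (ih (by omega) y hy) ?_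
    rcases Finset.mem_union.mp hz with hz | hz <;> obtain ⟨i, -, rfl⟩ := Finset.mem_image.mp hz
    · exact .rel _ _ ⟨i, by simp⟩
    · exact .symm _ _ (.rel _ _ ⟨i, by simp⟩)

end Windows

theorem exists_window {G : Type*} [Group G] {s t : ℕ} (S : Fin s → G)
    (hS : Subgroup.closure (Set.range S) = ⊤) (T : Fin t → G) :
    ∃ (K : ℕ) (w : Fin K → G) (q₀ : Fin K) (p : Fin t → Fin K),
      w q₀ = 1 ∧ w ∘ p = T ∧ ∀ q, Relation.EqvGen (CayleyStep S w) q₀ q := by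
  classical
  choose r hr using fun j => exists_mem_cayleyBall S hS (T j)
  let e := (cayleyBall S (Finset.univ.sup r)).equivFin
  have hT : ∀ j, T j ∈ cayleyBall S (Finset.univ.sup r) :=
    fun j => cayleyBall_mono S (Finset.le_sup (Finset.mem_univ j)) (hr j)
  refine ⟨_, fun q => e.symm q, e ⟨1, one_mem_cayleyBall S _⟩, fun j => e ⟨T j, hT j⟩,
    by simp, by ext; simp, fun q => ?_⟩
  simpa using eqvGen_cayleyStep_cayleyBall S e (e.symm q)

theorem pos_of_closure_range_eq_top {G : Type*} [Group G] [Nontrivial G] {s : ℕ} (S : Fin s → G)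
    (hS : Subgroup.closure (Set.range S) = ⊤) : 0 < s := by
  refine Nat.pos_of_ne_zero fun hs => ?_
  subst hs
  rw [Set.range_eq_empty, Subgroup.closure_empty] at hS
  exact bot_ne_top hS

def digit (m c q : ℕ) : ℕ := c / m ^ q % m

open Primrec in
theorem primrec_digit {α : Type*} [Primcodable α] {m c q : α → ℕ} (hm : Primrec m)
    (hc : Primrec c) (hq : Primrec q) : Primrec fun a => digit (m a) (c a) (q a) :=
  nat_mod.comp (nat_div.comp hc (nat_pow.comp hm hq)) hm

theorem digit_finFunctionFinEquiv {m K : ℕ} (f : Fin K → Fin m) (q : Fin K) :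
    digit m (finFunctionFinEquiv f) q = f q :=
  congrArg Fin.val (congrFun (finFunctionFinEquiv.symm_apply_apply f) q)

section LiftTileset

variable {G : Type*} [Group G] {s t K : ℕ} (S : Fin s → G) (w : Fin K → G) (q₀ : Fin K)
  (p : Fin t → Fin K)

/-- A colour `c < m ^ K` of `G` stands for the `K` base-`m` digits of `c`; on the tiling built from
an `H`-tiling `a`, digit `q` of the colour of `g` is `a (g * (w q)⁻¹)`. -/
def IsLiftDomino (m : ℕ) (Θ : List (ℕ × ℕ × ℕ)) (d : ℕ × ℕ × ℕ) : Prop :=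
  (∀ q i q', w q' = w q * S i → d.2.1 = i → digit m d.2.2 q' = digit m d.1 q) ∧
    ∀ j : Fin t, (digit m d.1 (p j), (j : ℕ), digit m d.1 q₀) ∈ Θ

open Classical in
noncomputable def liftTileset (T : ℕ × List (ℕ × ℕ × ℕ)) : ℕ × List (ℕ × ℕ × ℕ) :=
  (T.1 ^ K, (List.range (T.1 ^ K) ×ˢ List.range s ×ˢ List.range (T.1 ^ K)).filter
    (IsLiftDomino S w q₀ p T.1 T.2 ·))

theorem mem_liftTileset {m : ℕ} {Θ : List (ℕ × ℕ × ℕ)} {d : ℕ × ℕ × ℕ} :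
    d ∈ (liftTileset S w q₀ p (m, Θ)).2 ↔
      d.1 < m ^ K ∧ d.2.1 < s ∧ d.2.2 < m ^ K ∧ IsLiftDomino S w q₀ p m Θ d := by
  obtain ⟨a, i, b⟩ := d
  simp [liftTileset, and_assoc]

open Primrec in
theorem primrecRel_isLiftDomino :
    PrimrecRel fun (d : ℕ × ℕ × ℕ) (T : ℕ × List (ℕ × ℕ × ℕ)) =>
      IsLiftDomino S w q₀ p T.1 T.2 d := by
  classical
  have hm : Primrec fun x : (ℕ × ℕ × ℕ) × (ℕ × List (ℕ × ℕ × ℕ)) => x.2.1 := fst.comp snd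
  have hc : Primrec fun x : (ℕ × ℕ × ℕ) × (ℕ × List (ℕ × ℕ × ℕ)) => x.1.1 := fst.comp fst
  have hi : Primrec fun x : (ℕ × ℕ × ℕ) × (ℕ × List (ℕ × ℕ × ℕ)) => x.1.2.1 :=
    fst.comp (snd.comp fst)
  have hc' : Primrec fun x : (ℕ × ℕ × ℕ) × (ℕ × List (ℕ × ℕ × ℕ)) => x.1.2.2 :=
    snd.comp (snd.comp fst)
  have hedge : PrimrecRel fun (e : Fin K × Fin s × Fin K)
      (x : (ℕ × ℕ × ℕ) × (ℕ × List (ℕ × ℕ × ℕ))) => w e.2.2 = w e.1 * S e.2.1 → x.1.2.1 = e.2.1 →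
        digit x.2.1 x.1.2.2 e.2.2 = digit x.2.1 x.1.1 e.1 := by
    have hstep : PrimrecPred fun e : Fin K × Fin s × Fin K => w e.2.2 = w e.1 * S e.2.1 :=
      (dom_finite _).primrecPred
    exact (hstep.comp fst).imp ((Primrec.eq.comp (hi.comp snd)
      (fin_val.comp (fst.comp (snd.comp fst)))).imp (Primrec.eq.comp
        (primrec_digit (hm.comp snd) (hc'.comp snd) (fin_val.comp (snd.comp (snd.comp fst))))
        (primrec_digit (hm.comp snd) (hc.comp snd) (fin_val.comp (fst.comp fst)))))
  have hvert : PrimrecRel fun (j : Fin t) (x : (ℕ × ℕ × ℕ) × (ℕ × List (ℕ × ℕ × ℕ))) =>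
      (digit x.2.1 x.1.1 (p j), (j : ℕ), digit x.2.1 x.1.1 q₀) ∈ x.2.2 :=
    PrimrecRel.mem_list.comp (pair (primrec_digit (hm.comp snd) (hc.comp snd)
        (fin_val.comp ((dom_finite p).comp fst))) (pair (fin_val.comp fst)
          (primrec_digit (hm.comp snd) (hc.comp snd) (const _)))) (snd.comp (snd.comp snd))
  exact (hedge.forall_of_fintype.and hvert.forall_of_fintype).of_eq fun x => by
    simp [IsLiftDomino, Prod.forall]

open Primrec in
theorem primrec_liftTileset : Primrec (liftTileset S w q₀ p) := by
  classical
  have hM : Primrec fun T : ℕ × List (ℕ × ℕ × ℕ) => T.1 ^ K := nat_pow.comp fst (const K)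
  refine pair hM ((PrimrecRel.listFilter (primrecRel_isLiftDomino S w q₀ p)).comp
    (list_product.comp (list_range.comp hM) (list_product.comp (const _) (list_range.comp hM)))
    Primrec.id)

theorem tileable_liftTileset_of_tileable (hq₀ : w q₀ = 1) {m : ℕ} {Θ : List (ℕ × ℕ × ℕ)}
    (h : Tileable (w ∘ p) m Θ) :
    Tileable S (liftTileset S w q₀ p (m, Θ)).1 (liftTileset S w q₀ p (m, Θ)).2 := by
  obtain ⟨a, ha, hΘ⟩ := h
  let col g : Fin (m ^ K) := finFunctionFinEquiv fun q => ⟨a (g * (w q)⁻¹), ha _⟩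
  refine ⟨fun g => col g, fun g => (col g).isLt, fun g i =>
    (mem_liftTileset S w q₀ p).2 ⟨(col g).isLt, i.isLt, (col _).isLt, ?_, fun j => ?_⟩⟩
  · rintro q k q' hq hk
    obtain rfl := Fin.val_injective hk
    simp only [col, digit_finFunctionFinEquiv]
    simp [hq, mul_assoc]
  · simp only [col, digit_finFunctionFinEquiv]
    simpa [hq₀] using hΘ (g * (w (p j))⁻¹) j

theorem tileable_of_tileable_liftTileset (hs : 0 < s) (hq₀ : w q₀ = 1)
    (hconn : ∀ q, Relation.EqvGen (CayleyStep S w) q₀ q) {m : ℕ} {Θ : List (ℕ × ℕ × ℕ)}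
    (h : Tileable S (liftTileset S w q₀ p (m, Θ)).1 (liftTileset S w q₀ p (m, Θ)).2) :
    Tileable (w ∘ p) m Θ := by
  obtain ⟨c, hc, hΘ⟩ := h
  have hdom g i := ((mem_liftTileset S w q₀ p).1 (hΘ g i)).2.2.2
  have hm : 0 < m := Nat.pos_of_ne_zero <| by
    rintro rfl
    simpa [liftTileset, zero_pow q₀.pos.ne'] using hc 1
  have edge g i q q' (h : w q' = w q * S i) : digit m (c (g * S i)) q' = digit m (c g) q :=
    (hdom g i).1 q i q' h rfl
  refine ⟨fun g => digit m (c g) q₀, fun g => Nat.mod_lt _ hm, fun g j => ?_⟩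
  have transport :=
    transport_of_eqvGen S w (v := fun g q => digit m (c g) q) edge (hconn (p j)) g
  simp only [hq₀, inv_one, mul_one] at transport
  -- the vertex constraints of a point sit in every domino at it, hence the need for `s > 0`
  simpa [transport] using (hdom (g * w (p j)) ⟨0, hs⟩).2 j

theorem tileable_liftTileset_iff (hs : 0 < s) (hq₀ : w q₀ = 1)
    (hconn : ∀ q, Relation.EqvGen (CayleyStep S w) q₀ q) (T : ℕ × List (ℕ × ℕ × ℕ)) :
    Tileable S (liftTileset S w q₀ p T).1 (liftTileset S w q₀ p T).2 ↔
      Tileable (w ∘ p) T.1 T.2 :=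
  ⟨tileable_of_tileable_liftTileset S w q₀ p hs hq₀ hconn,
    tileable_liftTileset_of_tileable S w q₀ p hq₀⟩

end LiftTileset

theorem domino_undecidable_of_subgroup_general {G : Type*} [Group G] {s t : ℕ}
    (Sf : Fin s → G) (hS : Subgroup.closure (Set.range Sf) = ⊤)
    (H : Subgroup G) [Infinite H]
    (Tf : Fin t → H)
    (hH : ¬ DominoDecidable Tf) :
    ¬ DominoDecidable Sf := by
  have : Infinite G := Infinite.of_injective (fun h : H => (h : G)) Subtype.val_injective
  have hs : 0 < s := pos_of_closure_range_eq_top Sf hS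
  obtain ⟨K, w, q₀, p, hq₀, hwp, hconn⟩ := exists_window Sf hS fun j => (Tf j : G)
  rintro ⟨f, hf, hfT⟩
  refine hH ⟨fun T => f (liftTileset Sf w q₀ p T),
    hf.comp (primrec_liftTileset Sf w q₀ p).to_comp, fun T => ?_⟩
  rw [hfT, tileable_liftTileset_iff Sf w q₀ p hs hq₀ hconn, hwp, tileable_subgroup_iff]

/-- If `H` is an infinite finitely generated subgroup of a finitely generated
group `G` and the domino problem of `H` is undecidable, then so is that of
`G`. -/
theorem domino_undecidable_of_subgroup {G : Type*} [Group G] {s t : ℕ}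
    (Sf : Fin s → G) (hS : Subgroup.closure (Set.range Sf) = ⊤)
    (H : Subgroup G) [Infinite H]
    (Tf : Fin t → H) (hT : Subgroup.closure (Set.range Tf) = ⊤)
    (hH : ¬ DominoDecidable Tf) :
    ¬ DominoDecidable Sf :=
  domino_undecidable_of_subgroup_general Sf hS H Tf hH
end

section
/- Let Γ be a δ-hyperbolic Cayley graph of a group G with finite generating set S, with bipartite Cayley graph, and define the horosphere graph Γ_β for β(g) = ‖g‖ − n: vertices are g with ‖g‖ = n and C(g) infinite, with an edge between g and h whenever there exist geodesic rays from g and h staying at bounded distance. Then any edge {g,h} of Γ_β satisfies ‖g⁻¹h‖ ≤ 2δ; in particular Γ_β has degree bounded by #B(2δ), uniformly in n. -/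
/-- The Cayley graph of `(G, S)`. -/
def cayley (G : Type*) [Group G] (S : Set G) : SimpleGraph G :=
  SimpleGraph.fromRel (fun g h => g⁻¹ * h ∈ S)

/-- The cone of `g`. -/
def cone {G : Type*} [Group G] (S : Set G) (g : G) : Set G :=
  {x : G | wordLength S x = wordLength S g + wordLength S (g⁻¹ * x)}

/-- The edge relation of the horosphere graph `Γ_β` for `β(g) = ‖g‖ − n`:
`g ≠ h` on the sphere of radius `n` with infinite cones, joined whenever there
are geodesic rays starting at `g`, `h` that remain at bounded distance. -/
def horoEdge {G : Type*} [Group G] (S : Set G) (n : ℕ) (g h : G) : Prop :=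
  g ≠ h ∧ wordLength S g = n ∧ wordLength S h = n ∧
  (cone S g).Infinite ∧ (cone S h).Infinite ∧
  ∃ (r s : ℕ → G) (K : ℕ), r 0 = g ∧ s 0 = h ∧
    (∀ m : ℕ, (r m)⁻¹ * r (m + 1) ∈ S) ∧
    (∀ m : ℕ, wordLength S (r m) = n + m) ∧
    (∀ m : ℕ, (s m)⁻¹ * s (m + 1) ∈ S) ∧
    (∀ m : ℕ, wordLength S (s m) = n + m) ∧
    (∀ m : ℕ, wordLength S ((r m)⁻¹ * s m) ≤ K)

/-!
Word length is distance from `1` in the Cayley graph, so a minimal word for `g` followed by a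
geodesic ray from `g` is a geodesic from `1` through `g`. For an edge `{g, h}` with rays `r`, `s`
at most `K` apart, the geodesics `1 → g → r M` and `1 → h → s M` together with a geodesic
`s M → r M` form a triangle. For `M > K + δ`, `g` cannot be `δ`-close to the short side, which is
at distance `≥ M` from `g`; so `g` is `δ`-close to some point of `1 → h → s M`, whose norm is then
within `δ` of `n`, and which is therefore within `δ` of `h`.
-/

section Metric

variable {V : Type*} {Γ : SimpleGraph V}

lemma dist_le_sub_of_dist_succ_le_one (hconn : Γ.Connected) {p : ℕ → V} {N : ℕ}
    (hstep : ∀ k < N, Γ.dist (p k) (p (k + 1)) ≤ 1) {i j : ℕ} (hij : i ≤ j) (hjN : j ≤ N) :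
    Γ.dist (p i) (p j) ≤ j - i := by
  induction j, hij using Nat.le_induction with
  | base => simp
  | succ j hij ih =>
    calc Γ.dist (p i) (p (j + 1)) ≤ Γ.dist (p i) (p j) + Γ.dist (p j) (p (j + 1)) :=
          hconn.dist_triangle
      _ ≤ (j - i) + 1 := Nat.add_le_add (ih (by omega)) (hstep j (by omega))
      _ = j + 1 - i := by omega

lemma isGeodesicSeg_of_le_dist (hconn : Γ.Connected) {p : ℕ → V} {N : ℕ}
    (hstep : ∀ k < N, Γ.dist (p k) (p (k + 1)) ≤ 1) (hN : N ≤ Γ.dist (p 0) (p N)) :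
    IsGeodesicSeg Γ N p := by
  have hdist : ∀ i j, i ≤ j → j ≤ N → Γ.dist (p i) (p j) = j - i := by
    intro i j hij hjN
    have h0i := dist_le_sub_of_dist_succ_le_one hconn hstep (Nat.zero_le i) (hij.trans hjN)
    have hij' := dist_le_sub_of_dist_succ_le_one hconn hstep hij hjN
    have hjN' := dist_le_sub_of_dist_succ_le_one hconn hstep hjN le_rfl
    have htri : Γ.dist (p 0) (p N) ≤
        Γ.dist (p 0) (p i) + (Γ.dist (p i) (p j) + Γ.dist (p j) (p N)) :=
      hconn.dist_triangle.trans (Nat.add_le_add_left hconn.dist_triangle _)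
    omega
  refine ⟨fun k hk => SimpleGraph.dist_eq_one_iff_adj.mp ?_, hdist⟩
  simpa using hdist k (k + 1) k.le_succ hk

lemma exists_isGeodesicSeg (hconn : Γ.Connected) (x y : V) :
    ∃ q : ℕ → V, q 0 = x ∧ q (Γ.dist x y) = y ∧ IsGeodesicSeg Γ (Γ.dist x y) q := by
  obtain ⟨w, hw⟩ := hconn.exists_walk_length_eq_dist x y
  have hend : w.getVert (Γ.dist x y) = y := hw ▸ w.getVert_length
  refine ⟨w.getVert, w.getVert_zero, hend, isGeodesicSeg_of_le_dist hconn (fun k hk => ?_) ?_⟩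
  · exact (SimpleGraph.dist_eq_one_iff_adj.mpr (w.adj_getVert_succ (hw ▸ hk))).le
  · rw [w.getVert_zero, hend]

theorem dist_le_two_mul_of_thinTriangles (hconn : Γ.Connected) {δ : ℕ}
    (hδ : ThinTriangles Γ δ) {L n : ℕ} {a b : ℕ → V} (ha : IsGeodesicSeg Γ L a)
    (hb : IsGeodesicSeg Γ L b) (h0 : a 0 = b 0) (hn : n ≤ L)
    (hfar : Γ.dist (a L) (b L) + δ < L - n) :
    Γ.dist (a n) (b n) ≤ 2 * δ := by
  obtain ⟨c, hc0, hcL, hc⟩ := exists_isGeodesicSeg hconn (b L) (a L)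
  have han : Γ.dist (b 0) (a n) = n := by simpa [h0] using ha.2 0 n (Nat.zero_le n) hn
  obtain ⟨j, ⟨hjL, hj⟩ | ⟨hjc, hj⟩⟩ :=
    hδ (a 0) (b L) (a L) L _ L b c a hb h0.symm rfl hc hc0 hcL ha rfl rfl n hn
  · -- `a n`, `b j` lie at distances `n`, `j` from the common base, so `|j - n| ≤ δ`
    have hbj : Γ.dist (b 0) (b j) = j := by simpa using hb.2 0 j (Nat.zero_le j) hjL
    have h1 := hconn.dist_triangle (u := b 0) (v := b j) (w := a n)
    have h2 := hconn.dist_triangle (u := b 0) (v := a n) (w := b j)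
    have h3 := hconn.dist_triangle (u := a n) (v := b j) (w := b n)
    rw [Γ.dist_comm (u := b j) (v := a n)] at h1
    rcases le_total j n with hjn | hnj
    · have := hb.2 j n hjn hn
      omega
    · have := hb.2 n j hnj hjL
      rw [Γ.dist_comm] at this
      omega
  · -- `a n` would be within `δ + dist (a L) (b L)` of `b L`, which is `L - n` farther from the base
    have hcj : Γ.dist (b L) (c j) = j := by simpa [hc0] using hc.2 0 j (Nat.zero_le j) hjc
    have hbL : Γ.dist (b 0) (b L) = L := by simpa using hb.2 0 L (Nat.zero_le L) le_rfl
    have h1 := hconn.dist_triangle (u := b 0) (v := a n) (w := b L)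
    have h2 := hconn.dist_triangle (u := a n) (v := c j) (w := b L)
    rw [Γ.dist_comm] at hjc
    rw [Γ.dist_comm (u := c j)] at h2
    omega

end Metric

section WordLength

variable {G : Type*} [Group G] {S : Set G}

lemma wordLength_le_length {w : List G} (hw : ∀ x ∈ w, x ∈ S) :
    wordLength S w.prod ≤ w.length :=
  Nat.sInf_le ⟨w, hw, rfl, rfl⟩

lemma cayley_adj_iff (hsymm : S⁻¹ = S) {x y : G} :
    (cayley G S).Adj x y ↔ x ≠ y ∧ x⁻¹ * y ∈ S := by
  refine ⟨?_, fun ⟨hne, h⟩ => ⟨hne, Or.inl h⟩⟩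
  rintro ⟨hne, h | h⟩
  · exact ⟨hne, h⟩
  · refine ⟨hne, ?_⟩
    rw [← hsymm]
    simpa using h

lemma exists_word_of_walk (hsymm : S⁻¹ = S) {x y : G} (p : (cayley G S).Walk x y) :
    ∃ w : List G, (∀ t ∈ w, t ∈ S) ∧ w.length = p.length ∧ w.prod = x⁻¹ * y := by
  induction p with
  | nil => exact ⟨[], by simp, rfl, by simp⟩
  | @cons a b c hab q ih =>
    obtain ⟨w, hw, hlen, hprod⟩ := ih
    refine ⟨(a⁻¹ * b) :: w, ?_, by simp [hlen], by simp [hprod, mul_assoc]⟩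
    exact List.forall_mem_cons.mpr ⟨((cayley_adj_iff hsymm).mp hab).2, hw⟩

lemma cayley_connected (hgen : Subgroup.closure S = ⊤) : (cayley G S).Connected := by
  have hreach : ∀ g x : G, (cayley G S).Reachable x (x * g) := by
    intro g
    induction (hgen ▸ Subgroup.mem_top g : g ∈ Subgroup.closure S)
      using Subgroup.closure_induction with
    | mem t ht =>
      intro x
      by_cases hx : x = x * t
      · rw [← hx]
      · exact SimpleGraph.Adj.reachable ⟨hx, Or.inl (by simpa using ht)⟩
    | one => simp
    | mul g₁ g₂ _ _ h₁ h₂ =>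
      exact fun x => (h₁ x).trans (by simpa [mul_assoc] using h₂ (x * g₁))
    | inv g _ h => exact fun x => by simpa using (h (x * g⁻¹)).symm
  have : Nonempty G := ⟨1⟩
  exact .mk fun x y => by simpa using hreach (x⁻¹ * y) x

lemma exists_word_length_eq_wordLength (hsymm : S⁻¹ = S) (hgen : Subgroup.closure S = ⊤)
    (g : G) : ∃ w : List G, (∀ x ∈ w, x ∈ S) ∧ w.length = wordLength S g ∧ w.prod = g := by
  obtain ⟨p⟩ := (cayley_connected hgen).preconnected 1 g
  obtain ⟨w, hw, -, hprod⟩ := exists_word_of_walk hsymm p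
  have hne : {m | ∃ w : List G, (∀ x ∈ w, x ∈ S) ∧ w.length = m ∧ w.prod = g}.Nonempty :=
    ⟨w.length, w, hw, rfl, by simpa using hprod⟩
  exact Nat.sInf_mem hne

lemma cayley_dist_le_one (hsymm : S⁻¹ = S) {x y : G} (h : x⁻¹ * y ∈ S) :
    (cayley G S).dist x y ≤ 1 := by
  by_cases hxy : x = y
  · simp [hxy]
  · exact (SimpleGraph.dist_eq_one_iff_adj.mpr ((cayley_adj_iff hsymm).mpr ⟨hxy, h⟩)).le

lemma cayley_dist_eq_wordLength (hsymm : S⁻¹ = S) (hgen : Subgroup.closure S = ⊤) (x y : G) :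
    (cayley G S).dist x y = wordLength S (x⁻¹ * y) := by
  have hconn := cayley_connected (S := S) hgen
  refine le_antisymm ?_ ?_
  · obtain ⟨w, hw, hlen, hprod⟩ := exists_word_length_eq_wordLength hsymm hgen (x⁻¹ * y)
    have hstep : ∀ k < w.length,
        (cayley G S).dist (x * (w.take k).prod) (x * (w.take (k + 1)).prod) ≤ 1 := fun k hk =>
      cayley_dist_le_one hsymm <| by
        simpa [List.prod_take_succ w k hk] using hw _ (w.getElem_mem hk)
    simpa [hprod, ← hlen] using dist_le_sub_of_dist_succ_le_one hconn hstep (Nat.zero_le _) le_rfl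
  · obtain ⟨p, hp⟩ := hconn.exists_walk_length_eq_dist x y
    obtain ⟨w, hw, hlen, hprod⟩ := exists_word_of_walk hsymm p
    simpa [hprod, hlen, hp] using wordLength_le_length hw

lemma exists_isGeodesicSeg_through_ray (hsymm : S⁻¹ = S) (hgen : Subgroup.closure S = ⊤)
    {n : ℕ} {r : ℕ → G} (hstep : ∀ m, (r m)⁻¹ * r (m + 1) ∈ S)
    (hnorm : ∀ m, wordLength S (r m) = n + m) (M : ℕ) :
    ∃ a : ℕ → G, a 0 = 1 ∧ a n = r 0 ∧ a (n + M) = r M ∧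
      IsGeodesicSeg (cayley G S) (n + M) a := by
  obtain ⟨w, hw, hlen, hprod⟩ := exists_word_length_eq_wordLength hsymm hgen (r 0)
  rw [hnorm 0, add_zero] at hlen
  set a : ℕ → G := fun i => if i ≤ n then (w.take i).prod else r (i - n) with ha
  have hray : ∀ i, n ≤ i → a i = r (i - n) := by
    intro i hi
    rcases hi.eq_or_lt with rfl | hlt
    · simp [ha, List.take_of_length_le hlen.le, hprod]
    · simp [ha, Nat.not_le.mpr hlt]
  have hstep' : ∀ k < n + M, (a k)⁻¹ * a (k + 1) ∈ S := by
    intro k hk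
    by_cases hkn : k + 1 ≤ n
    · have hkw : k < w.length := by omega
      simpa [ha, hkn, hkn.trans' k.le_succ, List.prod_take_succ w k hkw] using
        hw _ (w.getElem_mem hkw)
    · rw [hray k (by omega), hray (k + 1) (by omega), show k + 1 - n = k - n + 1 by omega]
      exact hstep (k - n)
  have h0 : a 0 = 1 := by simp [ha]
  have hend : a (n + M) = r M := by simp [hray (n + M) (by omega)]
  refine ⟨a, h0, by simpa using hray n le_rfl, hend,
    isGeodesicSeg_of_le_dist (cayley_connected hgen)
      (fun k hk => cayley_dist_le_one hsymm (hstep' k hk)) ?_⟩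
  rw [cayley_dist_eq_wordLength hsymm hgen, h0, hend, inv_one, one_mul, hnorm]

theorem horoEdge.wordLength_inv_mul_le (hsymm : S⁻¹ = S) (hgen : Subgroup.closure S = ⊤)
    {δ : ℕ} (hδ : ThinTriangles (cayley G S) δ) {n : ℕ} {g h : G} (e : horoEdge S n g h) :
    wordLength S (g⁻¹ * h) ≤ 2 * δ := by
  obtain ⟨-, -, -, -, -, r, s, K, rfl, rfl, hrstep, hrnorm, hsstep, hsnorm, hK⟩ := e
  set M := K + δ + 1 with hM
  obtain ⟨a, ha0, han, haM, ha⟩ := exists_isGeodesicSeg_through_ray hsymm hgen hrstep hrnorm M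
  obtain ⟨b, hb0, hbn, hbM, hb⟩ := exists_isGeodesicSeg_through_ray hsymm hgen hsstep hsnorm M
  have hfar : (cayley G S).dist (a (n + M)) (b (n + M)) + δ < n + M - n := by
    rw [haM, hbM, cayley_dist_eq_wordLength hsymm hgen]
    have := hK M
    omega
  have := dist_le_two_mul_of_thinTriangles (cayley_connected hgen) hδ ha hb
    (ha0.trans hb0.symm) (Nat.le_add_right n M) hfar
  rwa [han, hbn, cayley_dist_eq_wordLength hsymm hgen] at this

lemma finite_setOf_wordLength_le (hSfin : S.Finite) (hsymm : S⁻¹ = S)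
    (hgen : Subgroup.closure S = ⊤) (m : ℕ) : {k : G | wordLength S k ≤ m}.Finite := by
  have := hSfin.to_subtype
  refine ((List.finite_length_le S m).image fun l => (l.map (↑)).prod).subset ?_
  intro k hk
  obtain ⟨w, hw, hlen, rfl⟩ := exists_word_length_eq_wordLength hsymm hgen k
  lift w to List S using hw
  refine ⟨w, ?_, rfl⟩
  show w.length ≤ m
  rw [← List.length_map Subtype.val, hlen]
  exact hk

end WordLength

theorem horosphere_edges_short_general (G : Type*) [Group G] (S : Set G)
    (hSfin : S.Finite) (hsymm : S⁻¹ = S) (hgen : Subgroup.closure S = ⊤)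
    (δ : ℕ) (hδ : ThinTriangles (cayley G S) δ)
    (n : ℕ) :
    (∀ g h : G, horoEdge S n g h → wordLength S (g⁻¹ * h) ≤ 2 * δ) ∧
    (∀ g : G, {h : G | horoEdge S n g h}.ncard ≤
      {k : G | wordLength S k ≤ 2 * δ}.ncard) := by
  refine ⟨fun g h e => e.wordLength_inv_mul_le hsymm hgen hδ, fun g => ?_⟩
  calc {h : G | horoEdge S n g h}.ncard
      = ((g⁻¹ * ·) '' {h : G | horoEdge S n g h}).ncard :=
        (Set.ncard_image_of_injective _ (mul_right_injective g⁻¹)).symm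
    _ ≤ {k : G | wordLength S k ≤ 2 * δ}.ncard :=
        Set.ncard_le_ncard
          (by rintro _ ⟨h, e, rfl⟩; exact e.wordLength_inv_mul_le hsymm hgen hδ)
          (finite_setOf_wordLength_le hSfin hsymm hgen _)

/-- In a `δ`-hyperbolic bipartite Cayley graph, endpoints of a horosphere-graph
edge satisfy `‖g⁻¹h‖ ≤ 2δ`; consequently the degree of every vertex of the
horosphere graph is bounded by the size of the ball of radius `2δ`, uniformly
in `n`. -/
theorem horosphere_edges_short (G : Type*) [Group G] (S : Set G)
    (hSfin : S.Finite) (hsymm : S⁻¹ = S) (hgen : Subgroup.closure S = ⊤)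
    (δ : ℕ) (hδ : ThinTriangles (cayley G S) δ)
    (hbip : ∀ w : List G, (∀ x ∈ w, x ∈ S) → w.prod = 1 → Even w.length)
    (n : ℕ) :
    (∀ g h : G, horoEdge S n g h → wordLength S (g⁻¹ * h) ≤ 2 * δ) ∧
    (∀ g : G, {h : G | horoEdge S n g h}.ncard ≤
      {k : G | wordLength S k ≤ 2 * δ}.ncard) :=
  horosphere_edges_short_general G S hSfin hsymm hgen δ hδ n
end
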